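/- For every integer n ≥ 1 and every real R ≥ 0, ∫_{0}^{R} ∫_{0}^{π} (1 − r² cos²θ)/(1 + r² cos²θ)² · r^{2n−1} sin^{2n−2}θ dθ dr = π ( P_n(R²) − (1 + R²)^{n − 3/2} ). -/

import Mathlib

/-
With `a = r²`, the inner integral is `r^(2n-1) Q_{n-1}(a)`, where
`Q_k(a) = ∫₀^π (1 - a cos²θ)/(1 + a cos²θ)² sin^(2k)θ dθ`. Integrating by parts against
`d/dθ [sin^(2k+1)θ cos θ/(1 + a cos²θ)]` expresses `a Q_{k+1}(a)` through the Wallis integral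
`W_k` and `M_k(a) = ∫₀^π sin^(2k)θ/(1 + a cos²θ) dθ`, while `sin² = 1 - cos²` gives
`a M_{k+1} = (1 + a) M_k - W_k`. Starting from `M_0(a) = π (1 + a)^(-1/2)`, this recursion makes
`a^k M_k(a)` equal to `π` times the binomial series of `(1 + a)^(k - 1/2)` with its first `k` terms
removed, hence `a^k Q_k(a) = (1 - 2k) π ((1 + a)^(k - 3/2) - P_k(a))`. Since
`P_{k+1}' = (k - 1/2) P_k`, the right-hand side of the theorem is an antiderivative in `R` of
`r^(2k+1) Q_k(r²)`.
-/

open MeasureTheory Finset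

/-- The generalized binomial coefficient `C(α, ℓ) = α(α−1)⋯(α−ℓ+1)/ℓ!`. -/
noncomputable def genChoose (α : ℝ) (ℓ : ℕ) : ℝ :=
  (∏ j ∈ Finset.range ℓ, (α - j)) / (Nat.factorial ℓ)

/-- The polynomial `P_n(X) = ∑_{ℓ=0}^{n−1} C(n−3/2, ℓ) X^ℓ`. -/
noncomputable def Ppoly (n : ℕ) (x : ℝ) : ℝ :=
  ∑ ℓ ∈ Finset.range n, genChoose ((n : ℝ) - 3/2) ℓ * x ^ ℓ

open Real

@[simp]
lemma genChoose_zero (α : ℝ) : genChoose α 0 = 1 := by simp [genChoose]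

lemma genChoose_succ (α : ℝ) (ℓ : ℕ) :
    genChoose α (ℓ + 1) = genChoose α ℓ * (α - ℓ) / (ℓ + 1) := by
  simp only [genChoose, prod_range_succ, Nat.factorial_succ]
  push_cast
  field_simp

lemma genChoose_add_one_succ (α : ℝ) (ℓ : ℕ) :
    genChoose (α + 1) (ℓ + 1) = genChoose α ℓ * (α + 1) / (ℓ + 1) := by
  simp only [genChoose, prod_range_succ', Nat.factorial_succ]
  push_cast
  simp only [add_sub_add_right_eq_sub, sub_zero]
  field_simp

lemma genChoose_add_one_succ_eq_add (α : ℝ) (ℓ : ℕ) :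
    genChoose (α + 1) (ℓ + 1) = genChoose α (ℓ + 1) + genChoose α ℓ := by
  rw [genChoose_add_one_succ, genChoose_succ]
  field_simp
  ring

lemma genChoose_sub_half_self (k : ℕ) :
    genChoose (k - 1/2) k = ∏ i ∈ range k, (2 * (i : ℝ) + 1) / (2 * i + 2) := by
  induction k with
  | zero => simp
  | succ k ih =>
    rw [prod_range_succ, ← ih, Nat.cast_succ, show (k : ℝ) + 1 - 1/2 = (k - 1/2) + 1 by ring,
      genChoose_add_one_succ]
    field_simp
    ring

noncomputable def binomialPartialSum (α : ℝ) (m : ℕ) (x : ℝ) : ℝ :=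
  ∑ ℓ ∈ range m, genChoose α ℓ * x ^ ℓ

lemma binomialPartialSum_succ (α : ℝ) (m : ℕ) (x : ℝ) :
    binomialPartialSum α (m + 1) x = binomialPartialSum α m x + genChoose α m * x ^ m :=
  sum_range_succ _ _

lemma binomialPartialSum_succ_zero (α : ℝ) (m : ℕ) : binomialPartialSum α (m + 1) 0 = 1 := by
  simp [binomialPartialSum, sum_range_succ']

lemma binomialPartialSum_add_one_succ (α : ℝ) (m : ℕ) (x : ℝ) :
    binomialPartialSum (α + 1) (m + 1) x
      = (1 + x) * binomialPartialSum α m x + genChoose α m * x ^ m := by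
  induction m with
  | zero => simp [binomialPartialSum]
  | succ m ih =>
    rw [binomialPartialSum_succ, ih, binomialPartialSum_succ, genChoose_add_one_succ_eq_add]
    ring

lemma hasDerivAt_binomialPartialSum (α : ℝ) (m : ℕ) (x : ℝ) :
    HasDerivAt (binomialPartialSum (α + 1) (m + 1)) ((α + 1) * binomialPartialSum α m x) x := by
  have h : HasDerivAt (binomialPartialSum (α + 1) (m + 1))
      (∑ ℓ ∈ range (m + 1), genChoose (α + 1) ℓ * (ℓ * x ^ (ℓ - 1))) x := by
    unfold binomialPartialSum
    exact HasDerivAt.fun_sum fun ℓ _ => (hasDerivAt_pow ℓ x).const_mul _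
  refine h.congr_deriv ?_
  rw [sum_range_succ', binomialPartialSum, mul_sum]
  simp only [genChoose_add_one_succ, Nat.cast_zero, zero_mul, mul_zero, add_zero,
    Nat.add_sub_cancel, Nat.cast_succ]
  refine sum_congr rfl fun i _ => ?_
  field_simp

lemma Ppoly_eq_binomialPartialSum (n : ℕ) :
    Ppoly n = binomialPartialSum ((n : ℝ) - 3/2) n := rfl

lemma hasDerivAt_Ppoly_succ (k : ℕ) (x : ℝ) :
    HasDerivAt (Ppoly (k + 1)) ((k - 1/2) * Ppoly k x) x := by
  rw [Ppoly_eq_binomialPartialSum, Ppoly_eq_binomialPartialSum,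
    show ((k + 1 : ℕ) : ℝ) - 3/2 = (k - 3/2) + 1 by push_cast; ring]
  convert hasDerivAt_binomialPartialSum ((k : ℝ) - 3/2) k x using 2
  ring

lemma continuous_Ppoly (n : ℕ) : Continuous (Ppoly n) := by
  unfold Ppoly
  fun_prop

lemma one_add_mul_cos_sq_pos {a : ℝ} (ha : -1 < a) (θ : ℝ) : 0 < 1 + a * cos θ ^ 2 := by
  rcases le_total 0 a with h | h
  · positivity
  · nlinarith [cos_sq_le_one θ]

/-- On `(-π/2, π/2)` this primitive is `arctan (tan θ / b)`, rewritten with the subtraction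
formula for `arctan` so that it stays smooth across `π/2`. -/
lemma hasDerivAt_add_arctan_sin_mul_cos_div {a b : ℝ} (hb : 0 < b) (hab : b ^ 2 = 1 + a)
    (θ : ℝ) :
    HasDerivAt (fun θ => θ + arctan ((1 - b) * sin θ * cos θ / (1 + (b - 1) * cos θ ^ 2)))
      (b / (1 + a * cos θ ^ 2)) θ := by
  have hd := (one_add_mul_cos_sq_pos (a := b - 1) (by linarith) θ).ne'
  have hD := (one_add_mul_cos_sq_pos (a := a) (by nlinarith) θ).ne'
  have hg := (((hasDerivAt_sin θ).const_mul (1 - b)).mul (hasDerivAt_cos θ)).div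
      ((((hasDerivAt_cos θ).pow 2).const_mul (b - 1)).const_add 1) hd
  refine ((hasDerivAt_id θ).add hg.arctan).congr_deriv ?_
  have hs := sin_sq_add_cos_sq θ
  have hsq : 1 + ((1 - b) * sin θ * cos θ / (1 + (b - 1) * cos θ ^ 2)) ^ 2
      = (1 + a * cos θ ^ 2) / (1 + (b - 1) * cos θ ^ 2) ^ 2 := by
    rw [div_pow, eq_div_iff (pow_ne_zero 2 hd), add_mul, div_mul_cancel₀ _ (pow_ne_zero 2 hd)]
    linear_combination cos θ ^ 2 * hab + (b - 1) ^ 2 * cos θ ^ 2 * hs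
  simp only [Pi.mul_apply, Pi.div_apply, Pi.pow_apply, hsq, Nat.cast_ofNat, Nat.add_one_sub_one,
    pow_one]
  have hd' : 1 + cos θ ^ 2 * (b - 1) ≠ 0 := by rwa [mul_comm]
  field_simp
  linear_combination (-cos θ ^ 2) * hab + ((b - 1) - (b - 1) ^ 2 * cos θ ^ 2) * hs

theorem integral_one_div_one_add_mul_cos_sq {a : ℝ} (ha : -1 < a) :
    ∫ θ in 0..π, 1 / (1 + a * cos θ ^ 2) = π * (1 + a) ^ (-(1/2) : ℝ) := by
  have h1a : 0 < 1 + a := by linarith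
  have hb : 0 < √(1 + a) := sqrt_pos.2 h1a
  have hcont : Continuous fun θ => √(1 + a) / (1 + a * cos θ ^ 2) :=
    continuous_const.div (by fun_prop) fun θ => (one_add_mul_cos_sq_pos ha θ).ne'
  have h := intervalIntegral.integral_eq_sub_of_hasDerivAt
    (fun θ _ => hasDerivAt_add_arctan_sin_mul_cos_div hb (sq_sqrt h1a.le) θ)
    (hcont.intervalIntegrable 0 π)
  simp only [sin_pi, sin_zero, mul_zero, zero_mul, zero_div, arctan_zero, add_zero, sub_zero] at h
  have hscale : ∫ θ in 0..π, 1 / (1 + a * cos θ ^ 2)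
      = (√(1 + a))⁻¹ * ∫ θ in 0..π, √(1 + a) / (1 + a * cos θ ^ 2) := by
    rw [← intervalIntegral.integral_const_mul]
    refine intervalIntegral.integral_congr fun θ _ => ?_
    field_simp
  rw [hscale, h, rpow_neg h1a.le, ← sqrt_eq_rpow, mul_comm]

noncomputable def sinPowDivIntegral (k : ℕ) (a : ℝ) : ℝ :=
  ∫ θ in 0..π, sin θ ^ (2 * k) / (1 + a * cos θ ^ 2)

noncomputable def sinPowKernelIntegral (k : ℕ) (a : ℝ) : ℝ :=
  ∫ θ in 0..π, (1 - a * cos θ ^ 2) / (1 + a * cos θ ^ 2) ^ 2 * sin θ ^ (2 * k)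

lemma integral_sin_pow_two_mul (k : ℕ) :
    ∫ θ in 0..π, sin θ ^ (2 * k) = π * genChoose (k - 1/2) k := by
  rw [integral_sin_pow_even, genChoose_sub_half_self]

lemma mul_sinPowDivIntegral_succ {a : ℝ} (ha : -1 < a) (k : ℕ) :
    a * sinPowDivIntegral (k + 1) a
      = (1 + a) * sinPowDivIntegral k a - ∫ θ in 0..π, sin θ ^ (2 * k) := by
  have hM : Continuous fun θ => sin θ ^ (2 * k) / (1 + a * cos θ ^ 2) := by
    fun_prop (disch := intro θ; have := one_add_mul_cos_sq_pos ha θ; positivity)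
  rw [sinPowDivIntegral, sinPowDivIntegral, ← intervalIntegral.integral_const_mul,
    ← intervalIntegral.integral_const_mul, ← intervalIntegral.integral_sub
      ((hM.const_mul _).intervalIntegrable 0 π)
      ((by fun_prop : Continuous fun θ => sin θ ^ (2 * k)).intervalIntegrable 0 π)]
  refine intervalIntegral.integral_congr fun θ _ => ?_
  have hD := (one_add_mul_cos_sq_pos ha θ).ne'
  field_simp
  linear_combination a * sin θ ^ (2 * k) * sin_sq_add_cos_sq θ

lemma pow_mul_sinPowDivIntegral {a : ℝ} (ha : -1 < a) (k : ℕ) :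
    a ^ k * sinPowDivIntegral k a
      = π * ((1 + a) ^ ((k : ℝ) - 1/2) - binomialPartialSum (k - 1/2) k a) := by
  induction k with
  | zero =>
    have h := integral_one_div_one_add_mul_cos_sq ha
    simp only [sinPowDivIntegral, mul_zero, pow_zero, one_mul, CharP.cast_eq_zero, zero_sub,
      binomialPartialSum, range_zero, sum_empty, sub_zero]
    exact h
  | succ k ih =>
    have h1a : 1 + a ≠ 0 := by linarith
    rw [pow_succ, mul_assoc, mul_sinPowDivIntegral_succ ha, mul_sub, mul_left_comm, ih,
      integral_sin_pow_two_mul, Nat.cast_succ, show (k : ℝ) + 1 - 1/2 = (k - 1/2) + 1 by ring,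
      binomialPartialSum_add_one_succ, rpow_add_one h1a]
    ring

lemma hasDerivAt_mul_sin_mul_cos_div {a : ℝ} (ha : -1 < a) (θ : ℝ) :
    HasDerivAt (fun θ => a * sin θ * cos θ / (1 + a * cos θ ^ 2))
      (1 / (1 + a * cos θ ^ 2)
        - (1 + a) * ((1 - a * cos θ ^ 2) / (1 + a * cos θ ^ 2) ^ 2)) θ := by
  have hD := (one_add_mul_cos_sq_pos ha θ).ne'
  have h := (((hasDerivAt_sin θ).const_mul a).mul (hasDerivAt_cos θ)).div
    ((((hasDerivAt_cos θ).pow 2).const_mul a).const_add 1) hD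
  refine h.congr_deriv ?_
  simp only [Pi.mul_apply, Pi.pow_apply, Nat.cast_ofNat, Nat.add_one_sub_one, pow_one]
  field_simp
  linear_combination a * (a * cos θ ^ 2 - 1) * sin_sq_add_cos_sq θ

lemma one_add_mul_sinPowKernelIntegral_zero {a : ℝ} (ha : -1 < a) :
    (1 + a) * sinPowKernelIntegral 0 a = sinPowDivIntegral 0 a := by
  have hK : IntervalIntegrable (fun θ => (1 - a * cos θ ^ 2) / (1 + a * cos θ ^ 2) ^ 2)
      volume 0 π := by
    apply Continuous.intervalIntegrable
    fun_prop (disch := intro θ; have := one_add_mul_cos_sq_pos ha θ; positivity)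
  have hM : IntervalIntegrable (fun θ => 1 / (1 + a * cos θ ^ 2)) volume 0 π := by
    apply Continuous.intervalIntegrable
    fun_prop (disch := intro θ; have := one_add_mul_cos_sq_pos ha θ; positivity)
  have h := intervalIntegral.integral_eq_sub_of_hasDerivAt
    (fun θ _ => hasDerivAt_mul_sin_mul_cos_div ha θ) (hM.sub (hK.const_mul _))
  rw [intervalIntegral.integral_sub hM (hK.const_mul _), intervalIntegral.integral_const_mul] at h
  simp only [sin_pi, sin_zero, mul_zero, zero_mul, zero_div, sub_zero] at h
  simp only [sinPowKernelIntegral, sinPowDivIntegral, mul_zero, pow_zero, mul_one] at h ⊢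
  linarith

lemma hasDerivAt_mul_sin_pow_mul_cos_div {a : ℝ} (ha : -1 < a) (k : ℕ) (θ : ℝ) :
    HasDerivAt (fun θ => a * sin θ ^ (2 * k + 1) * cos θ / (1 + a * cos θ ^ 2))
      ((2 * k + 1) * (sin θ ^ (2 * k) - sin θ ^ (2 * k) / (1 + a * cos θ ^ 2))
        - a * ((1 - a * cos θ ^ 2) / (1 + a * cos θ ^ 2) ^ 2 * sin θ ^ (2 * (k + 1)))) θ := by
  have hD := (one_add_mul_cos_sq_pos ha θ).ne'
  have h := ((((hasDerivAt_sin θ).pow (2 * k + 1)).const_mul a).mul (hasDerivAt_cos θ)).div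
    ((((hasDerivAt_cos θ).pow 2).const_mul a).const_add 1) hD
  refine h.congr_deriv ?_
  simp only [Pi.mul_apply, Pi.pow_apply, Nat.cast_ofNat, Nat.add_one_sub_one, pow_one]
  push_cast
  field_simp
  ring

lemma mul_sinPowKernelIntegral_succ {a : ℝ} (ha : -1 < a) (k : ℕ) :
    a * sinPowKernelIntegral (k + 1) a
      = (2 * k + 1) * ((∫ θ in 0..π, sin θ ^ (2 * k)) - sinPowDivIntegral k a) := by
  have hK : IntervalIntegrable (fun θ =>
      (1 - a * cos θ ^ 2) / (1 + a * cos θ ^ 2) ^ 2 * sin θ ^ (2 * (k + 1))) volume 0 π := by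
    apply Continuous.intervalIntegrable
    fun_prop (disch := intro θ; have := one_add_mul_cos_sq_pos ha θ; positivity)
  have hM : IntervalIntegrable (fun θ => sin θ ^ (2 * k) / (1 + a * cos θ ^ 2)) volume 0 π := by
    apply Continuous.intervalIntegrable
    fun_prop (disch := intro θ; have := one_add_mul_cos_sq_pos ha θ; positivity)
  have hS : IntervalIntegrable (fun θ => sin θ ^ (2 * k)) volume 0 π := by
    apply Continuous.intervalIntegrable
    fun_prop
  have h := intervalIntegral.integral_eq_sub_of_hasDerivAt
    (fun θ _ => hasDerivAt_mul_sin_pow_mul_cos_div ha k θ)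
    (((hS.sub hM).const_mul _).sub (hK.const_mul _))
  rw [intervalIntegral.integral_sub ((hS.sub hM).const_mul _) (hK.const_mul _),
    intervalIntegral.integral_const_mul, intervalIntegral.integral_const_mul,
    intervalIntegral.integral_sub hS hM] at h
  simp only [sin_pi, sin_zero, ne_eq, Nat.add_eq_zero_iff, one_ne_zero, and_false,
    not_false_eq_true, zero_pow, mul_zero, zero_mul, zero_div, sub_zero] at h
  rw [sinPowKernelIntegral, sinPowDivIntegral]
  linarith

lemma pow_mul_sinPowKernelIntegral {a : ℝ} (ha : -1 < a) (k : ℕ) :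
    a ^ k * sinPowKernelIntegral k a
      = (1 - 2 * k) * π * ((1 + a) ^ ((k : ℝ) - 3/2) - Ppoly k a) := by
  have h1a : 1 + a ≠ 0 := by linarith
  cases k with
  | zero =>
    have hM := pow_mul_sinPowDivIntegral ha 0
    rw [← one_add_mul_sinPowKernelIntegral_zero ha] at hM
    simp only [pow_zero, one_mul, CharP.cast_eq_zero, zero_sub, binomialPartialSum, range_zero,
      sum_empty, sub_zero] at hM
    rw [show (-(1/2) : ℝ) = -(3/2) + 1 by norm_num, rpow_add_one h1a] at hM
    simp only [pow_zero, one_mul, CharP.cast_eq_zero, mul_zero, sub_zero, zero_sub, Ppoly,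
      range_zero, sum_empty, one_mul]
    field_simp at hM ⊢
    linarith
  | succ k =>
    rw [pow_succ, mul_assoc, mul_sinPowKernelIntegral_succ ha, mul_left_comm, mul_sub,
      pow_mul_sinPowDivIntegral ha, integral_sin_pow_two_mul, Ppoly_eq_binomialPartialSum,
      show ((k + 1 : ℕ) : ℝ) - 3/2 = k - 1/2 by push_cast; ring, binomialPartialSum_succ]
    push_cast
    ring

lemma integral_kernel_mul_pow (k : ℕ) (r : ℝ) :
    ∫ θ in 0..π, (1 - r ^ 2 * cos θ ^ 2) / (1 + r ^ 2 * cos θ ^ 2) ^ 2 *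
        (r ^ (2 * k + 1) * sin θ ^ (2 * k))
      = (1 - 2 * k) * π * (r * ((1 + r ^ 2) ^ ((k : ℝ) - 3/2) - Ppoly k (r ^ 2))) := by
  calc _ = r * ((r ^ 2) ^ k * sinPowKernelIntegral k (r ^ 2)) := by
        rw [sinPowKernelIntegral, ← intervalIntegral.integral_const_mul,
          ← intervalIntegral.integral_const_mul]
        refine intervalIntegral.integral_congr fun θ _ => ?_
        ring
    _ = _ := by
        rw [pow_mul_sinPowKernelIntegral (by nlinarith [sq_nonneg r])]
        ring

lemma hasDerivAt_Ppoly_succ_sq_sub_rpow (k : ℕ) (r : ℝ) :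
    HasDerivAt (fun r => π * (Ppoly (k + 1) (r ^ 2) - (1 + r ^ 2) ^ (((k + 1 : ℕ) : ℝ) - 3/2)))
      ((1 - 2 * k) * π * (r * ((1 + r ^ 2) ^ ((k : ℝ) - 3/2) - Ppoly k (r ^ 2)))) r := by
  have hsq : HasDerivAt (fun r : ℝ => r ^ 2) (2 * r) r := by simpa using hasDerivAt_pow 2 r
  have hP := (hasDerivAt_Ppoly_succ k (r ^ 2)).comp r hsq
  have hR := (hasDerivAt_rpow_const (p := ((k + 1 : ℕ) : ℝ) - 3/2)
    (Or.inl (by positivity : 1 + r ^ 2 ≠ 0))).comp r (hsq.const_add 1)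
  refine ((hP.sub hR).const_mul π).congr_deriv ?_
  rw [show ((k + 1 : ℕ) : ℝ) - 3/2 - 1 = k - 3/2 by push_cast; ring]
  push_cast
  ring

theorem stmt5_general (n : ℕ) (hn : 1 ≤ n) (R : ℝ) :
    (∫ r in (0 : ℝ)..R, ∫ θ in (0 : ℝ)..Real.pi,
        (1 - r ^ 2 * Real.cos θ ^ 2) / (1 + r ^ 2 * Real.cos θ ^ 2) ^ 2 *
          (r ^ (2 * n - 1) * Real.sin θ ^ (2 * n - 2))) =
      Real.pi * (Ppoly n (R ^ 2) - (1 + R ^ 2) ^ ((n : ℝ) - 3/2)) := by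
  obtain ⟨k, rfl⟩ := Nat.exists_eq_add_of_le' hn
  have hcont : Continuous fun r : ℝ =>
      (1 - 2 * k) * π * (r * ((1 + r ^ 2) ^ ((k : ℝ) - 3/2) - Ppoly k (r ^ 2))) := by
    have hrpow : Continuous fun r : ℝ => (1 + r ^ 2) ^ ((k : ℝ) - 3/2) :=
      (by fun_prop : Continuous fun r : ℝ => 1 + r ^ 2).rpow_const fun r => Or.inl (by positivity)
    have hP := continuous_Ppoly k
    fun_prop
  simp only [show 2 * (k + 1) - 1 = 2 * k + 1 by omega, show 2 * (k + 1) - 2 = 2 * k by omega,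
    integral_kernel_mul_pow]
  rw [intervalIntegral.integral_eq_sub_of_hasDerivAt
    (fun r _ => hasDerivAt_Ppoly_succ_sq_sub_rpow k r) (hcont.intervalIntegrable 0 R)]
  simp [Ppoly_eq_binomialPartialSum, binomialPartialSum_succ_zero]

theorem stmt5 (n : ℕ) (hn : 1 ≤ n) (R : ℝ) (hR : 0 ≤ R) :
    (∫ r in (0 : ℝ)..R, ∫ θ in (0 : ℝ)..Real.pi,
        (1 - r ^ 2 * Real.cos θ ^ 2) / (1 + r ^ 2 * Real.cos θ ^ 2) ^ 2 *
          (r ^ (2 * n - 1) * Real.sin θ ^ (2 * n - 2))) =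
      Real.pi * (Ppoly n (R ^ 2) - (1 + R ^ 2) ^ ((n : ℝ) - 3/2)) :=
  stmt5_general n hn R
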